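/- arXiv:cs/9908010 — 2 statements merged into one kernel-verified Lean document; each statement's English description precedes it below -/
import Mathlib

section
/- Let t, n, F be positive integers with n ≥ 2, and set r = ⌈(8t + 128·log n)/F⌉. If in each round a fixed replica receives a number of new updates distributed Binomial(m, F/n) with m ≥ n/4, independently across rounds, then the probability that the total number of new updates over r rounds is less than t is at most 1/n². By a union bound over at most n replicas, with probability ≥ 1 − 1/n every replica receives at least t new updates within r rounds. -/
/-!
Exponential tilting: for `i < t` one has `p ^ i ≤ 2 ^ t (p / 2) ^ i`, so the lower tail of
`Binomial(M, p)` below `t` is at most `2 ^ t` times a partial binomial expansion of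
`(p / 2 + (1 - p)) ^ M`, hence at most `2 ^ t (1 - p / 2) ^ M ≤ exp (t - M p / 2)`.
The choice of the number of rounds makes the mean `M p` at least `2 t + 32 log n`,
so the exponent is at most `-2 log n`; the second claim is the union bound over `n` replicas.
-/

open Finset Real

theorem sum_range_mul_pow_mul_choose_le_add_pow {R : Type*} [CommSemiring R] [PartialOrder R]
    [IsOrderedRing R] {x y : R} (hx : 0 ≤ x) (hy : 0 ≤ y) (M t : ℕ) :
    ∑ i ∈ range t, x ^ i * y ^ (M - i) * M.choose i ≤ (x + y) ^ M := by
  calc ∑ i ∈ range t, x ^ i * y ^ (M - i) * M.choose i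
      ≤ ∑ i ∈ range (max t (M + 1)), x ^ i * y ^ (M - i) * M.choose i :=
        sum_le_sum_of_subset_of_nonneg (range_subset_range.mpr (le_max_left _ _))
          fun _ _ _ ↦ by positivity
    _ = ∑ i ∈ range (M + 1), x ^ i * y ^ (M - i) * M.choose i := by
        refine (sum_subset (range_subset_range.mpr (le_max_right _ _)) fun i _ hi ↦ ?_).symm
        rw [Nat.choose_eq_zero_of_lt (by simpa using hi), Nat.cast_zero, mul_zero]
    _ = (x + y) ^ M := (add_pow x y M).symm

theorem binomial_lowerTail_le_two_pow_mul {p : ℝ} (hp0 : 0 ≤ p) (hp1 : p ≤ 1) (M t : ℕ) :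
    ∑ i ∈ range t, (M.choose i : ℝ) * p ^ i * (1 - p) ^ (M - i) ≤ 2 ^ t * (1 - p / 2) ^ M := by
  calc ∑ i ∈ range t, (M.choose i : ℝ) * p ^ i * (1 - p) ^ (M - i)
      ≤ ∑ i ∈ range t, 2 ^ t * ((p / 2) ^ i * (1 - p) ^ (M - i) * M.choose i) := by
        refine sum_le_sum fun i hi ↦ ?_
        have hpi : p ^ i = 2 ^ i * (p / 2) ^ i := by rw [← mul_pow, mul_div_cancel₀ p two_ne_zero]
        rw [hpi]
        have : (2 : ℝ) ^ i ≤ 2 ^ t := pow_le_pow_right₀ one_le_two (mem_range.mp hi).le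
        have : 0 ≤ 1 - p := sub_nonneg.mpr hp1
        calc (M.choose i : ℝ) * (2 ^ i * (p / 2) ^ i) * (1 - p) ^ (M - i)
            = 2 ^ i * ((p / 2) ^ i * (1 - p) ^ (M - i) * M.choose i) := by ring
          _ ≤ 2 ^ t * ((p / 2) ^ i * (1 - p) ^ (M - i) * M.choose i) := by gcongr
    _ = 2 ^ t * ∑ i ∈ range t, (p / 2) ^ i * (1 - p) ^ (M - i) * M.choose i := (mul_sum ..).symm
    _ ≤ 2 ^ t * (p / 2 + (1 - p)) ^ M := by
        gcongr
        exact sum_range_mul_pow_mul_choose_le_add_pow (by positivity) (by linarith) M t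
    _ = 2 ^ t * (1 - p / 2) ^ M := by ring_nf

theorem binomial_lowerTail_le_exp {p : ℝ} (hp0 : 0 ≤ p) (hp1 : p ≤ 1) (M t : ℕ) :
    ∑ i ∈ range t, (M.choose i : ℝ) * p ^ i * (1 - p) ^ (M - i) ≤ exp (t - M * p / 2) := by
  have h2 : (2 : ℝ) ≤ exp 1 := by linarith [add_one_le_exp 1]
  have hq : 1 - p / 2 ≤ exp (-(p / 2)) := by linarith [add_one_le_exp (-(p / 2))]
  have hq0 : 0 ≤ 1 - p / 2 := by linarith
  calc ∑ i ∈ range t, (M.choose i : ℝ) * p ^ i * (1 - p) ^ (M - i)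
      ≤ 2 ^ t * (1 - p / 2) ^ M := binomial_lowerTail_le_two_pow_mul hp0 hp1 M t
    _ ≤ exp 1 ^ t * exp (-(p / 2)) ^ M := by gcongr
    _ = exp (t - M * p / 2) := by
        rw [← exp_nat_mul, ← exp_nat_mul, ← exp_add]; ring_nf

theorem random_last_stage_general (n t F M : ℕ)
    (hn : 2 ≤ n) (hF : 0 < F) (hFn : F ≤ n)
    (hM : ((⌈(8 * (t : ℝ) + 128 * Real.log n) / (F : ℝ)⌉₊ : ℝ) * (n : ℝ)) / 4 ≤ (M : ℝ)) :
    (∑ i ∈ Finset.range t,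
        (M.choose i : ℝ) * ((F : ℝ) / (n : ℝ)) ^ i * (1 - (F : ℝ) / (n : ℝ)) ^ (M - i))
      ≤ 1 / (n : ℝ) ^ 2 ∧
    (n : ℝ) *
      (∑ i ∈ Finset.range t,
        (M.choose i : ℝ) * ((F : ℝ) / (n : ℝ)) ^ i * (1 - (F : ℝ) / (n : ℝ)) ^ (M - i))
      ≤ 1 / (n : ℝ) := by
  have hn0 : (0 : ℝ) < n := by positivity
  have hlog : 0 ≤ log n := log_nonneg (by exact_mod_cast (by omega : 1 ≤ n))
  have hmean : 2 * t + 32 * log n ≤ M * (F / n) :=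
    calc 2 * t + 32 * log n = (8 * t + 128 * log n) / F * F / 4 := by field_simp; ring
      _ ≤ ⌈(8 * (t : ℝ) + 128 * log n) / F⌉₊ * F / 4 := by gcongr; exact Nat.le_ceil _
      _ = ⌈(8 * (t : ℝ) + 128 * log n) / F⌉₊ * n / 4 * (F / n) := by field_simp
      _ ≤ M * (F / n) := by gcongr
  have htail : ∑ i ∈ range t, (M.choose i : ℝ) * (F / n) ^ i * (1 - F / n) ^ (M - i)
      ≤ 1 / n ^ 2 :=
    calc _ ≤ exp (t - M * (F / n) / 2) :=
          binomial_lowerTail_le_exp (by positivity)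
            (div_le_one_of_le₀ (by exact_mod_cast hFn) hn0.le) M t
      _ ≤ exp (log (n ^ 2)⁻¹) := by
          rw [exp_le_exp, log_inv, log_pow]
          push_cast
          linarith
      _ = 1 / n ^ 2 := by rw [exp_log (by positivity), one_div]
  refine ⟨htail, ?_⟩
  calc _ ≤ (n : ℝ) * (1 / n ^ 2) := by gcongr
    _ = 1 / n := by field_simp

/-- Last stage of the Random algorithm: with `r = ⌈(8t + 128 log n)/F⌉`
rounds, per-round receipts `Binomial(m_i, F/n)` with `m_i ≥ n/4` summing to a
`Binomial(M, F/n)` total with `M ≥ r n / 4`, the probability that fewer than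
`t` new updates arrive is at most `1/n²`; and `n` times this tail (union bound
over the `n` replicas) is at most `1/n`. -/
theorem random_last_stage (n t F M : ℕ)
    (hn : 2 ≤ n) (ht : 0 < t) (hF : 0 < F) (hFn : F ≤ n)
    (hM : ((⌈(8 * (t : ℝ) + 128 * Real.log n) / (F : ℝ)⌉₊ : ℝ) * (n : ℝ)) / 4 ≤ (M : ℝ)) :
    (∑ i ∈ Finset.range t,
        (M.choose i : ℝ) * ((F : ℝ) / (n : ℝ)) ^ i * (1 - (F : ℝ) / (n : ℝ)) ^ (M - i))
      ≤ 1 / (n : ℝ) ^ 2 ∧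
    (n : ℝ) *
      (∑ i ∈ Finset.range t,
        (M.choose i : ℝ) * ((F : ℝ) / (n : ℝ)) ^ i * (1 - (F : ℝ) / (n : ℝ)) ^ (M - i))
      ≤ 1 / (n : ℝ) :=
  random_last_stage_general n t F M hn hF hFn hM
end

section
/- Combining the pieces of Theorem 2: let n, t, α, F^in, D be positive reals with t ≥ 2·log₂ n, α ≤ n, and suppose every replica hears from at most M = 10·D·F^in distinct senders within D rounds. If D ≤ (1/2)·n·t/(10·e·F^in·α), then there exists an initial α-subset I of the n replicas such that no replica outside I hears from t or more members of I within D rounds; consequently no new replica can become active, so any diffusion protocol with D-amortized fan-in F^in has expected delay D satisfying D·F^in = Ω(t·n/α). -/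
/-! A fixed `t`-set lies in a uniformly random `α`-subset of `n` points with probability
`C(n-t, α-t) / C(n, α) ≤ (α/n)^t`, and a set of `m` senders has `C(m, t) ≤ (m e / t)^t` subsets
of size `t`. Hence a replica hears from `t` members of `I` with probability at most
`(m α e / (t n))^t ≤ 2^(-t) ≤ n^(-2)`, and a union bound over the `n` replicas leaves
probability at least `1 - 1/n` that no replica does. -/

open Finset

theorem Nat.descFactorial_mul_pow_le {a n : ℕ} (h : a ≤ n) (t : ℕ) :
    a.descFactorial t * n ^ t ≤ n.descFactorial t * a ^ t := by
  induction t with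
  | zero => simp
  | succ t ih =>
    have step : (a - t) * n ≤ (n - t) * a := by
      rw [Nat.sub_mul, Nat.sub_mul, mul_comm a n]
      have := Nat.mul_le_mul_left t h
      omega
    calc a.descFactorial (t + 1) * n ^ (t + 1)
        = ((a - t) * n) * (a.descFactorial t * n ^ t) := by
          rw [Nat.descFactorial_succ, pow_succ]; ring
      _ ≤ ((n - t) * a) * (n.descFactorial t * a ^ t) := Nat.mul_le_mul step ih
      _ = n.descFactorial (t + 1) * a ^ (t + 1) := by
          rw [Nat.descFactorial_succ, pow_succ]; ring

theorem Nat.choose_mul_pow_le_mul_exp_one_pow (m t : ℕ) :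
    (m.choose t : ℝ) * t ^ t ≤ (m * Real.exp 1) ^ t := by
  have hexp : (t : ℝ) ^ t / t.factorial ≤ Real.exp 1 ^ t := by
    rw [Real.exp_one_pow]; exact Real.pow_div_factorial_le_exp _ t.cast_nonneg t
  calc (m.choose t : ℝ) * t ^ t ≤ (m : ℝ) ^ t / t.factorial * t ^ t := by
        gcongr; exact Nat.choose_le_pow_div t m
    _ = (m : ℝ) ^ t * ((t : ℝ) ^ t / t.factorial) := by ring
    _ ≤ (m * Real.exp 1) ^ t := by rw [mul_pow]; gcongr

theorem sq_le_two_pow_of_two_mul_logb_le {n t : ℕ} (hn : 0 < n)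
    (h : 2 * Real.logb 2 n ≤ t) : n ^ 2 ≤ 2 ^ t := by
  have hn' : (0 : ℝ) < n ^ 2 := by positivity
  have h2 : ((2 : ℕ) : ℝ) * Real.logb 2 n ≤ t := mod_cast h
  rw [← Real.logb_pow, Real.logb_le_iff_le_rpow one_lt_two hn', Real.rpow_natCast] at h2
  exact_mod_cast h2

namespace Finset

theorem card_filter_not_forall_mul_le {ι β : Type*} [Fintype ι] {s : Finset β} (p : ι → β → Prop)
    [∀ j, DecidablePred (p j)] [DecidablePred fun x => ∀ j, p j x] {m c : ℕ}
    (h : ∀ j, #{x ∈ s | ¬ p j x} * m ≤ c) :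
    #{x ∈ s | ¬ ∀ j, p j x} * m ≤ Fintype.card ι * c := by
  classical
  have hcover : {x ∈ s | ¬ ∀ j, p j x} ⊆ univ.biUnion fun j => {x ∈ s | ¬ p j x} := by
    intro x hx
    obtain ⟨hxs, j, hj⟩ : x ∈ s ∧ ∃ j, ¬ p j x := by simpa only [mem_filter, not_forall] using hx
    exact mem_biUnion.mpr ⟨j, mem_univ j, mem_filter.mpr ⟨hxs, hj⟩⟩
  calc #{x ∈ s | ¬ ∀ j, p j x} * m ≤ (∑ j, #{x ∈ s | ¬ p j x}) * m :=
        Nat.mul_le_mul_right _ ((card_le_card hcover).trans card_biUnion_le)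
    _ ≤ ∑ _j : ι, c := by rw [sum_mul]; exact sum_le_sum fun j _ => h j
    _ = Fintype.card ι * c := by rw [sum_const, card_univ, smul_eq_mul]

section

variable {β : Type*} {s : Finset β} (p : β → Prop) [DecidablePred p] {n : ℕ}

theorem one_sub_one_div_le_card_filter_div_card (hn : 0 < n) (hs : s.Nonempty)
    (hbad : #{x ∈ s | ¬ p x} * n ≤ #s) :
    1 - 1 / (n : ℝ) ≤ #{x ∈ s | p x} / #s := by
  have hsplit : (#{x ∈ s | p x} : ℝ) + #{x ∈ s | ¬ p x} = #s :=
    mod_cast card_filter_add_card_filter_not p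
  have hs' : (0 : ℝ) < #s := mod_cast hs.card_pos
  have hbad' : (#{x ∈ s | ¬ p x} : ℝ) ≤ #s / n := by
    rw [le_div_iff₀ (by positivity)]; exact_mod_cast hbad
  rw [le_div_iff₀ hs', one_sub_mul, one_div_mul_eq_div]
  linarith

theorem exists_of_card_filter_not_mul_le (hn : 2 ≤ n) (hs : s.Nonempty)
    (hbad : #{x ∈ s | ¬ p x} * n ≤ #s) :
    ∃ x ∈ s, p x := by
  have hsplit := card_filter_add_card_filter_not (s := s) p
  have hgood : 0 < #(s.filter p) := by
    have := Nat.mul_le_mul_left #{x ∈ s | ¬ p x} hn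
    have := hs.card_pos
    omega
  obtain ⟨x, hx⟩ := card_pos.mp hgood
  exact ⟨x, mem_filter.mp hx⟩

end

section

variable {ι : Type*} [Fintype ι] [DecidableEq ι]

theorem card_filter_superset_mul_pow_le (T : Finset ι) (k : ℕ) :
    #{I ∈ powersetCard k univ | T ⊆ I} * Fintype.card ι ^ #T
      ≤ (Fintype.card ι).choose k * k ^ #T := by
  set n := Fintype.card ι
  set t := #T
  rcases eq_empty_or_nonempty {I ∈ powersetCard k (univ : Finset ι) | T ⊆ I} with hempty | ⟨I, hI⟩
  · simp [hempty]
  obtain ⟨hIk, hTI⟩ : #I = k ∧ T ⊆ I := by simpa using hI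
  have htk : t ≤ k := hIk ▸ card_le_card hTI
  have hkn : k ≤ n := hIk ▸ card_le_univ I
  have hcount : #{I ∈ powersetCard k univ | T ⊆ I} = (n - t).choose (k - t) := by
    simpa using card_filter_powersetCard_subset T univ k (subset_univ T) htk
  -- `Nat.choose_mul` multiplied through by `t!`
  have hsplit : n.choose k * k.descFactorial t = n.descFactorial t * (n - t).choose (k - t) := by
    rw [Nat.descFactorial_eq_factorial_mul_choose, Nat.descFactorial_eq_factorial_mul_choose,
      mul_left_comm, Nat.choose_mul htk, mul_assoc]
  have hpos : 0 < n.descFactorial t := Nat.descFactorial_pos.mpr (htk.trans hkn)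
  refine Nat.le_of_mul_le_mul_left ?_ hpos
  calc n.descFactorial t * (#{I ∈ powersetCard k univ | T ⊆ I} * n ^ t)
      = n.choose k * (k.descFactorial t * n ^ t) := by rw [hcount, ← mul_assoc, ← hsplit]; ring
    _ ≤ n.choose k * (n.descFactorial t * k ^ t) :=
        Nat.mul_le_mul_left _ (Nat.descFactorial_mul_pow_le hkn t)
    _ = n.descFactorial t * (n.choose k * k ^ t) := by ring

theorem card_filter_le_card_inter_mul_pow_le (S : Finset ι) (k t : ℕ) :
    #{I ∈ powersetCard k univ | t ≤ #(S ∩ I)} * Fintype.card ι ^ t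
      ≤ (#S).choose t * ((Fintype.card ι).choose k * k ^ t) := by
  have hcover : {I ∈ powersetCard k (univ : Finset ι) | t ≤ #(S ∩ I)}
      ⊆ (S.powersetCard t).biUnion fun T => {I ∈ powersetCard k univ | T ⊆ I} := by
    intro I hI
    rw [mem_filter] at hI
    obtain ⟨T, hTS, hTcard⟩ := exists_subset_card_eq hI.2
    exact mem_biUnion.mpr ⟨T, mem_powersetCard.mpr ⟨hTS.trans inter_subset_left, hTcard⟩,
      mem_filter.mpr ⟨hI.1, hTS.trans inter_subset_right⟩⟩
  calc #{I ∈ powersetCard k univ | t ≤ #(S ∩ I)} * Fintype.card ι ^ t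
      ≤ (∑ T ∈ S.powersetCard t, #{I ∈ powersetCard k univ | T ⊆ I}) * Fintype.card ι ^ t :=
        Nat.mul_le_mul_right _ ((card_le_card hcover).trans card_biUnion_le)
    _ ≤ ∑ _T ∈ S.powersetCard t, (Fintype.card ι).choose k * k ^ t := by
        rw [sum_mul]
        refine sum_le_sum fun T hT => ?_
        simpa [(mem_powersetCard.mp hT).2] using card_filter_superset_mul_pow_le T k
    _ = (#S).choose t * ((Fintype.card ι).choose k * k ^ t) := by
        rw [sum_const, card_powersetCard, smul_eq_mul]

theorem card_filter_le_card_inter_mul_two_pow_le (S : Finset ι) {k t : ℕ} (ht : 0 < t)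
    (hι : 0 < Fintype.card ι) (hsmall : #S * k * Real.exp 1 / (t * Fintype.card ι) ≤ 1 / 2) :
    #{I ∈ powersetCard k univ | t ≤ #(S ∩ I)} * 2 ^ t ≤ (Fintype.card ι).choose k := by
  set n := Fintype.card ι
  have htn : (0 : ℝ) < t * n := by positivity
  have hbound : (#S * k * Real.exp 1 : ℝ) ≤ t * n / 2 := by
    rw [div_le_iff₀ htn] at hsmall; linarith
  have hcount : (#{I ∈ powersetCard k univ | t ≤ #(S ∩ I)} * n ^ t : ℝ)
      ≤ (#S).choose t * (n.choose k * k ^ t) :=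
    mod_cast card_filter_le_card_inter_mul_pow_le S k t
  suffices h : (#{I ∈ powersetCard k univ | t ≤ #(S ∩ I)} * 2 ^ t : ℝ) * (t * n / 2) ^ t
      ≤ n.choose k * (t * n / 2) ^ t by
    exact_mod_cast le_of_mul_le_mul_right h (by positivity)
  calc (#{I ∈ powersetCard k univ | t ≤ #(S ∩ I)} * 2 ^ t : ℝ) * (t * n / 2) ^ t
      = (#{I ∈ powersetCard k univ | t ≤ #(S ∩ I)} * n ^ t : ℝ) * t ^ t := by
        rw [div_pow, mul_pow]; field_simp
    _ ≤ ((#S).choose t * (n.choose k * k ^ t)) * t ^ t := by gcongr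
    _ = n.choose k * (((#S).choose t : ℝ) * t ^ t * k ^ t) := by ring
    _ ≤ n.choose k * ((#S * Real.exp 1) ^ t * k ^ t) := by
        gcongr; exact Nat.choose_mul_pow_le_mul_exp_one_pow _ _
    _ = n.choose k * (#S * k * Real.exp 1) ^ t := by ring
    _ ≤ n.choose k * (t * n / 2) ^ t := by gcongr

end

end Finset

theorem delay_fan_in_tradeoff_core_general (n t α : ℕ) (D Fi : ℝ)
    (hn : 2 ≤ n) (ht : 0 < t) (hαn : α ≤ n)
    (hlog : 2 * Real.logb 2 n ≤ (t : ℝ))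
    (S : Fin n → Finset (Fin n))
    (hS : ∀ j : Fin n, ((S j).card : ℝ) ≤ 10 * D * Fi)
    (hsmall : 10 * D * Fi * (α : ℝ) * Real.exp 1 / ((t : ℝ) * (n : ℝ)) ≤ 1 / 2) :
    1 - 1 / (n : ℝ) ≤
      ((((Finset.univ : Finset (Fin n)).powersetCard α).filter
          (fun I => ∀ j : Fin n, (S j ∩ I).card < t)).card : ℝ) / (n.choose α : ℝ) ∧
    ∃ I : Finset (Fin n), I.card = α ∧ ∀ j : Fin n, (S j ∩ I).card < t := by
  have hn0 : 0 < n := by omega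
  have hbad_j (j : Fin n) :
      #{I ∈ powersetCard α univ | ¬ #(S j ∩ I) < t} * n ^ 2 ≤ n.choose α := by
    have hsmall_j : #(S j) * α * Real.exp 1 / (t * Fintype.card (Fin n)) ≤ 1 / 2 :=
      le_trans (by rw [Fintype.card_fin]; gcongr; exact hS j) hsmall
    calc #{I ∈ powersetCard α univ | ¬ #(S j ∩ I) < t} * n ^ 2
        ≤ #{I ∈ powersetCard α univ | t ≤ #(S j ∩ I)} * 2 ^ t := by
          simp only [not_lt]
          exact Nat.mul_le_mul_left _ (sq_le_two_pow_of_two_mul_logb_le hn0 hlog)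
      _ ≤ n.choose α := by
          simpa using card_filter_le_card_inter_mul_two_pow_le (S j) ht (by simpa) hsmall_j
  have hbad : #{I ∈ powersetCard α univ | ¬ ∀ j, #(S j ∩ I) < t} * n ≤ n.choose α := by
    refine Nat.le_of_mul_le_mul_right ?_ hn0
    calc #{I ∈ powersetCard α univ | ¬ ∀ j, #(S j ∩ I) < t} * n * n
        = #{I ∈ powersetCard α univ | ¬ ∀ j, #(S j ∩ I) < t} * n ^ 2 := by ring
      _ ≤ Fintype.card (Fin n) * n.choose α :=
          card_filter_not_forall_mul_le (fun j I => #(S j ∩ I) < t) hbad_j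
      _ = n.choose α * n := by rw [Fintype.card_fin, mul_comm]
  have hs : (powersetCard α (univ : Finset (Fin n))).Nonempty :=
    powersetCard_nonempty.mpr (by simpa)
  have hC : #(powersetCard α (univ : Finset (Fin n))) = n.choose α := by simp
  rw [← hC] at hbad ⊢
  refine ⟨one_sub_one_div_le_card_filter_div_card _ hn0 hs hbad, ?_⟩
  obtain ⟨I, hI, hgood⟩ := exists_of_card_filter_not_mul_le _ hn hs hbad
  exact ⟨I, (mem_powersetCard.mp hI).2, hgood⟩

/-- Core of the delay/fan-in tradeoff (Theorem 2): `n` replicas, threshold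
`t ≥ 2 log₂ n`; each replica `j` hears from a set `S_j` of at most
`10 D Fin` distinct senders within `D` rounds.  If
`10 D Fin α e / (t n) ≤ 1/2`, then for a uniformly random `α`-subset `I` of
the replicas, with probability at least `1 - 1/n` every `j` satisfies
`|S_j ∩ I| < t`; in particular some initial `α`-set `I` activates no new
replica within `D` rounds (forcing `D · Fin = Ω(t n / α)`). -/
theorem delay_fan_in_tradeoff_core (n t α : ℕ) (D Fi : ℝ)
    (hn : 2 ≤ n) (ht : 0 < t) (hα : 0 < α) (hαn : α ≤ n)
    (hD : 0 < D) (hFi : 0 < Fi)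
    (hlog : 2 * Real.logb 2 n ≤ (t : ℝ))
    (S : Fin n → Finset (Fin n))
    (hS : ∀ j : Fin n, ((S j).card : ℝ) ≤ 10 * D * Fi)
    (hsmall : 10 * D * Fi * (α : ℝ) * Real.exp 1 / ((t : ℝ) * (n : ℝ)) ≤ 1 / 2) :
    1 - 1 / (n : ℝ) ≤
      ((((Finset.univ : Finset (Fin n)).powersetCard α).filter
          (fun I => ∀ j : Fin n, (S j ∩ I).card < t)).card : ℝ) / (n.choose α : ℝ) ∧
    ∃ I : Finset (Fin n), I.card = α ∧ ∀ j : Fin n, (S j ∩ I).card < t :=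
  delay_fan_in_tradeoff_core_general n t α D Fi hn ht hαn hlog S hS hsmall
end
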